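/- In the n-dimensional Euclidean space EuclideanSpace ℝ (Fin n) with world function Σ(P,Q) = ½‖P − Q‖², the Euclideaness dimension condition holds: for every (n+2)-tuple of points P₀,…,P_{n+1} one has F_{n+1}(P₀,…,P_{n+1}) = 0, while there exists an (n+1)-tuple P₀,…,Pₙ with Fₙ(P₀,…,Pₙ) ≠ 0. -/

import Mathlib

/-- The quantity `F_m(P) = det[Σ(Pᵢ,P₀) + Σ(P₀,P_k) − Σ(Pᵢ,P_k)]` built from a
world function `W`. -/
noncomputable def FmW {V : Type*} (W : V → V → ℝ) (m : ℕ)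
    (P : Fin (m + 1) → V) : ℝ :=
  Matrix.det (Matrix.of fun i k : Fin m =>
    W (P i.succ) (P 0) + W (P 0) (P k.succ) - W (P i.succ) (P k.succ))

lemma entry_eq_inner {E : Type*} [NormedAddCommGroup E] [InnerProductSpace ℝ E]
    (x y z : E) :
    (1/2) * ‖x - z‖ ^ 2 + (1/2) * ‖z - y‖ ^ 2 - (1/2) * ‖x - y‖ ^ 2
      = inner ℝ (x - z) (y - z) := by
  have h1 : ‖(x - z) - (y - z)‖ ^ 2
      = ‖x - z‖ ^ 2 - 2 * inner ℝ (x - z) (y - z) + ‖y - z‖ ^ 2 :=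
    norm_sub_sq_real _ _
  have h2 : (x - z) - (y - z) = x - y := by abel
  have h3 : ‖z - y‖ = ‖y - z‖ := norm_sub_rev _ _
  rw [h2] at h1
  rw [h3]
  linarith

/-- in the n-dimensional Euclidean space with world function
`Σ(P,Q) = ½‖P−Q‖²`, the Euclideaness dimension condition holds:
`F_{n+1}` vanishes identically while `Fₙ` does not vanish identically. -/
theorem euclidean_dimension_condition (n : ℕ)
    (W : EuclideanSpace ℝ (Fin n) → EuclideanSpace ℝ (Fin n) → ℝ)
    (hW : ∀ P Q, W P Q = (1 / 2) * ‖P - Q‖ ^ 2) :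
    (∀ P : Fin (n + 2) → EuclideanSpace ℝ (Fin n), FmW W (n + 1) P = 0) ∧
    (∃ P : Fin (n + 1) → EuclideanSpace ℝ (Fin n), FmW W n P ≠ 0) := by
  have hentry : ∀ (m : ℕ) (P : Fin (m + 1) → EuclideanSpace ℝ (Fin n)),
      FmW W m P = Matrix.det (Matrix.of fun i k : Fin m =>
        (inner ℝ (P i.succ - P 0) (P k.succ - P 0) : ℝ)) := by
    intro m P
    unfold FmW
    congr 1
    ext i k
    simp only [Matrix.of_apply, hW]
    exact entry_eq_inner _ _ _
  constructor
  · intro P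
    rw [hentry]
    set v : Fin (n + 1) → EuclideanSpace ℝ (Fin n) := fun i => P i.succ - P 0 with hv
    have hdep : ¬ LinearIndependent ℝ v := by
      intro h
      have := h.fintype_card_le_finrank
      simp [finrank_euclideanSpace] at this
    rw [Fintype.not_linearIndependent_iff] at hdep
    obtain ⟨g, hg, i₀, hi₀⟩ := hdep
    rw [← Matrix.exists_mulVec_eq_zero_iff]
    refine ⟨g, fun hgz => hi₀ (by rw [hgz]; rfl), ?_⟩
    funext i
    simp only [Matrix.mulVec, dotProduct, Matrix.of_apply, Pi.zero_apply]
    have : (∑ k, inner ℝ (v i) (v k) * g k : ℝ) = inner ℝ (v i) (∑ k, g k • v k) := by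
      rw [inner_sum]
      congr 1; ext k; rw [real_inner_smul_right]; ring
    rw [this, hg, inner_zero_right]
  · refine ⟨fun i => if h : i = 0 then 0 else
      EuclideanSpace.single (i.pred h) 1, ?_⟩
    rw [hentry]
    have : (Matrix.of fun i k : Fin n =>
        (inner ℝ ((fun i : Fin (n+1) => if h : i = 0 then (0 : EuclideanSpace ℝ (Fin n)) else
          EuclideanSpace.single (i.pred h) 1) i.succ -
          (fun i : Fin (n+1) => if h : i = 0 then (0 : EuclideanSpace ℝ (Fin n)) else
          EuclideanSpace.single (i.pred h) 1) 0)
          ((fun i : Fin (n+1) => if h : i = 0 then (0 : EuclideanSpace ℝ (Fin n)) else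
          EuclideanSpace.single (i.pred h) 1) k.succ -
          (fun i : Fin (n+1) => if h : i = 0 then (0 : EuclideanSpace ℝ (Fin n)) else
          EuclideanSpace.single (i.pred h) 1) 0) : ℝ)) = 1 := by
      ext i k
      simp only [Matrix.of_apply, eq_self_iff_true, dite_true, dif_neg (Fin.succ_ne_zero i),
        dif_neg (Fin.succ_ne_zero k), sub_zero]
      rw [EuclideanSpace.inner_single_left]
      simp only [map_one, one_mul, EuclideanSpace.single_apply]
      rw [Matrix.one_apply]
      simp [Fin.pred_inj]
    rw [this, Matrix.det_one]
    norm_num
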